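/- (Continuity of the guessing probability at a unique point of maximal Bell violation.) Let K be a compact convex subset of a finite-dimensional real normed vector space E, let f : E → ℝ be continuous on K and convex on K, and define G : K → ℝ by G(x) := sup{ ∑ q_i f(e_i) : k ∈ ℕ, e_i ∈ extremePoints(K), q_i ≥ 0, ∑ q_i = 1, ∑ q_i e_i = x }. Let ℓ : E → ℝ be a continuous linear functional and suppose there is a unique point x* ∈ K at which ℓ attains its maximum t_max over K. Then G(x*) = f(x*) and for every ε > 0 there exists δ > 0 such that every x ∈ K with ℓ(x) ≥ t_max − δ satisfies |G(x) − f(x*)| ≤ ε. In particular, as the Bell value ℓ(x) tends to its maximum t_max, the guessing probability G(x) tends to its value at the maximally violating point. -/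

import Mathlib

/-! Since `x*` is the unique maximiser of `ℓ` on the compact set `K`, the points of `K` whose
Bell value is close to `ℓ x*` are close to `x*`. Hence for every `ε > 0` there is a `C` with
`f ≤ f x* + ε + C (ℓ x* - ℓ)` on `K`: near `x*` by continuity of `f`, and away from `x*` because
there `ℓ x* - ℓ` is bounded below while `f` is bounded. Averaging this affine bound over an
extremal decomposition of `x` gives `G x ≤ f x* + ε + C (ℓ x* - ℓ x)`, and Jensen's inequality
gives `G x ≥ f x ≥ f x* - ε`. Extremal decompositions exist by Minkowski's theorem, proved by
induction on the dimension: the ray from an extreme point `e` through `x` leaves `K` at a point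
`y` lying in a proper exposed face of `K`, and `x` lies on the segment `[e, y]`. -/

open Set Module Topology

lemma affineSpan_preimage_add_vectorSpan_eq_top {E : Type*} [AddCommGroup E] [Module ℝ E]
    {K : Set E} {z : E} (hz : z ∈ K) :
    affineSpan ℝ {w : vectorSpan ℝ K | z + (w : E) ∈ K} = ⊤ := by
  set V := vectorSpan ℝ K
  rw [AffineSubspace.affineSpan_eq_top_iff_vectorSpan_eq_top_of_nonempty ℝ V V
    ⟨0, by simpa using hz⟩, eq_top_iff]
  have hspan : V ≤ (vectorSpan ℝ {w : V | z + (w : E) ∈ K}).map V.subtype := by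
    refine Submodule.span_le.2 ?_
    rintro _ ⟨y, hy, y', hy', rfl⟩
    refine ⟨⟨y - z, vsub_mem_vectorSpan ℝ hy hz⟩ -ᵥ ⟨y' - z, vsub_mem_vectorSpan ℝ hy' hz⟩,
      vsub_mem_vectorSpan ℝ (by simpa) (by simpa), ?_⟩
    simp
  intro w _
  obtain ⟨w', hw', hw'w⟩ := hspan w.2
  rwa [← Subtype.ext hw'w]

section Minkowski

variable {E : Type*} [NormedAddCommGroup E] [NormedSpace ℝ E]

lemma IsCompact.exists_farthest_add_smul_mem {K : Set E} (hK : IsCompact K) {a v : E}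
    (hv : v ≠ 0) (hav : a + v ∈ K) :
    ∃ t : ℝ, 1 ≤ t ∧ a + t • v ∈ K ∧ ∀ s : ℝ, 0 < s → a + t • v + s • v ∉ K := by
  have hray : IsClosedEmbedding fun s : ℝ => a + s • v :=
    (Homeomorph.addLeft a).isClosedEmbedding.comp (isClosedEmbedding_smul_left hv)
  obtain ⟨t, htK, htmax⟩ := (hray.isCompact_preimage hK).exists_isGreatest ⟨1, by simpa⟩
  refine ⟨t, htmax (by simpa), htK, fun s hs hsK => ?_⟩
  have : t + s ≤ t := htmax (by simpa [add_smul, add_assoc] using hsK)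
  linarith

variable [FiniteDimensional ℝ E]

lemma Convex.exists_isMaxOn_of_forall_add_smul_notMem {K : Set E} (hK : Convex ℝ K) {z v : E}
    (hz : z ∈ K) (hv : v ∈ vectorSpan ℝ K) (hout : ∀ t : ℝ, 0 < t → z + t • v ∉ K) :
    ∃ g : StrongDual ℝ E, IsMaxOn g K z ∧ ∃ w ∈ K, g w < g z := by
  -- Inside `V`, the translate `K'` of `K` has interior points but `0` is not one of them.
  set V := vectorSpan ℝ K
  set K' : Set V := {w | z + (w : E) ∈ K}
  have hK' : Convex ℝ K' := (hK.translate_preimage_right z).linear_preimage V.subtype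
  have hint : (interior K').Nonempty :=
    hK'.interior_nonempty_iff_affineSpan_eq_top.2 (affineSpan_preimage_add_vectorSpan_eq_top hz)
  have h0 : (0 : V) ∉ interior K' := by
    intro h0
    have hsmall : ∀ᶠ t : ℝ in 𝓝[>] 0, t • (⟨v, hv⟩ : V) ∈ K' :=
      (tendsto_nhdsWithin_of_tendsto_nhds ((continuous_id.smul continuous_const).tendsto' 0 0
        (zero_smul ℝ _))).eventually (mem_interior_iff_mem_nhds.1 h0)
    obtain ⟨t, ht, htK⟩ := (hsmall.and self_mem_nhdsWithin).exists
    exact hout t htK ht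
  obtain ⟨m, hm⟩ := geometric_hahn_banach_open_point hK'.interior isOpen_interior h0
  have hmK' : ∀ w ∈ K', m w ≤ 0 := by
    refine fun w hw => closure_minimal (fun x hx => (by simpa using (hm x hx).le))
      (isClosed_Iic.preimage m.continuous) ?_
    rw [hK'.closure_interior_eq_closure_of_nonempty_interior hint]
    exact subset_closure hw
  obtain ⟨g, hg, -⟩ := exists_extension_norm_eq V m
  obtain ⟨w₀, hw₀⟩ := hint
  refine ⟨g, fun y hy => ?_, z + w₀, (interior_subset hw₀ : w₀ ∈ K'), ?_⟩
  · have := hmK' ⟨y - z, vsub_mem_vectorSpan ℝ hy hz⟩ (by simpa [K'])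
    rw [← hg] at this
    simpa using this
  · simpa [hg] using hm w₀ hw₀

lemma ContinuousLinearMap.finrank_vectorSpan_toExposed_lt (g : StrongDual ℝ E) {K : Set E}
    {w z : E} (hw : w ∈ K) (hz : z ∈ K) (hwz : g w ≠ g z) :
    finrank ℝ (vectorSpan ℝ (g.toExposed K)) < finrank ℝ (vectorSpan ℝ K) := by
  have hker : vectorSpan ℝ (g.toExposed K) ≤ vectorSpan ℝ K ⊓ LinearMap.ker (g : E →ₗ[ℝ] ℝ) := by
    refine Submodule.span_le.2 ?_
    rintro _ ⟨y, hy, y', hy', rfl⟩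
    exact ⟨vsub_mem_vectorSpan ℝ hy.1 hy'.1,
      by simp [le_antisymm (hy'.2 y hy.1) (hy.2 y' hy'.1)]⟩
  have hlt : vectorSpan ℝ K ⊓ LinearMap.ker (g : E →ₗ[ℝ] ℝ) < vectorSpan ℝ K :=
    inf_lt_left.2 fun hle => hwz <| by
      simpa [sub_eq_zero] using hle (vsub_mem_vectorSpan ℝ hw hz)
  exact Submodule.finrank_lt_finrank_of_lt (hker.trans_lt hlt)

theorem IsCompact.subset_convexHull_extremePoints {K : Set E} (hKc : IsCompact K)
    (hKconv : Convex ℝ K) : K ⊆ convexHull ℝ (K.extremePoints ℝ) := by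
  induction hn : finrank ℝ (vectorSpan ℝ K) using Nat.strong_induction_on generalizing K with
  | _ n IH =>
  intro x hx
  obtain ⟨e, he⟩ := hKc.extremePoints_nonempty ⟨x, hx⟩
  by_cases hxe : x = e
  · exact subset_convexHull ℝ _ (hxe ▸ he)
  obtain ⟨t, ht, hyK, hout⟩ := hKc.exists_farthest_add_smul_mem (a := e) (v := x - e)
    (sub_ne_zero.2 hxe) (by simpa using hx)
  obtain ⟨g, hgmax, w, hw, hgw⟩ := hKconv.exists_isMaxOn_of_forall_add_smul_notMem hyK
    (vsub_mem_vectorSpan ℝ hx (mem_extremePoints.1 he).1) hout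
  have hF : IsExposed ℝ K (g.toExposed K) := ContinuousLinearMap.toExposed.isExposed (l := g)
  have hyF : e + t • (x - e) ∈ convexHull ℝ (K.extremePoints ℝ) :=
    convexHull_mono hF.isExtreme.extremePoints_subset_extremePoints <|
      IH _ (hn ▸ g.finrank_vectorSpan_toExposed_lt hw hyK hgw.ne) (hF.isCompact hKc)
        (hF.convex hKconv) rfl ⟨hyK, hgmax⟩
  have hx_eq : x = e + t⁻¹ • (e + t • (x - e) - e) := by
    rw [add_sub_cancel_left, smul_smul, inv_mul_cancel₀ (by positivity), one_smul,
      add_sub_cancel]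
  rw [hx_eq]
  exact (convex_convexHull ℝ _).add_smul_sub_mem (subset_convexHull ℝ _ he) hyF
    ⟨by positivity, inv_le_one_of_one_le₀ ht⟩

end Minkowski

section StrictMax

variable {X : Type*} [TopologicalSpace X] {K : Set X} {ℓ f : X → ℝ} {x₀ : X}

lemma IsCompact.exists_superlevel_subset_of_strict_max (hK : IsCompact K)
    (hℓ : ContinuousOn ℓ K) (hlt : ∀ y ∈ K, y ≠ x₀ → ℓ y < ℓ x₀) {U : Set X}
    (hU : U ∈ 𝓝[K] x₀) : ∃ δ > 0, ∀ y ∈ K, ℓ x₀ - δ ≤ ℓ y → y ∈ U := by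
  obtain ⟨V, hV, hVU⟩ := mem_nhdsWithin_iff_exists_mem_nhds_inter.1 hU
  have hgap : ∀ y ∈ K \ interior V, 0 < ℓ x₀ - ℓ y := fun y hy =>
    sub_pos.2 (hlt y hy.1 fun h => hy.2 (h ▸ mem_interior_iff_mem_nhds.2 hV))
  obtain ⟨δ, hδ, hδgap⟩ := (hK.diff isOpen_interior).exists_forall_le'
    ((continuousOn_const.sub hℓ).mono sdiff_subset) hgap
  refine ⟨δ / 2, half_pos hδ, fun y hy hyℓ => hVU ⟨?_, hy⟩⟩
  by_contra hyV
  have : δ ≤ ℓ x₀ - ℓ y := hδgap y ⟨hy, fun h => hyV (interior_subset h)⟩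
  linarith

lemma IsCompact.exists_le_add_mul_sub_of_strict_max (hK : IsCompact K) (hf : ContinuousOn f K)
    (hℓ : ContinuousOn ℓ K) (hx₀ : x₀ ∈ K) (hlt : ∀ y ∈ K, y ≠ x₀ → ℓ y < ℓ x₀) {ε : ℝ}
    (hε : 0 < ε) : ∃ C > 0, ∀ y ∈ K, f y ≤ f x₀ + ε + C * (ℓ x₀ - ℓ y) := by
  obtain ⟨M, hM⟩ := hK.bddAbove_image hf
  have hfM : ∀ y ∈ K, f y ≤ M := fun y hy => hM (mem_image_of_mem f hy)
  obtain ⟨δ, hδ, hnear⟩ := hK.exists_superlevel_subset_of_strict_max hℓ hlt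
    (hf x₀ hx₀ (Iio_mem_nhds (lt_add_of_pos_right (f x₀) hε)))
  have hC : 0 < (M - f x₀ + 1) / δ := div_pos (by linarith [hfM x₀ hx₀]) hδ
  refine ⟨_, hC, fun y hy => ?_⟩
  have hgap : 0 ≤ ℓ x₀ - ℓ y := by
    rcases eq_or_ne y x₀ with rfl | hne
    · rw [sub_self]
    · linarith [hlt y hy hne]
  rcases le_or_gt (ℓ x₀ - δ) (ℓ y) with hclose | hfar
  · have : f y < f x₀ + ε := hnear y hy hclose
    nlinarith
  · have : (M - f x₀ + 1) / δ * δ ≤ (M - f x₀ + 1) / δ * (ℓ x₀ - ℓ y) :=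
      mul_le_mul_of_nonneg_left (by linarith) hC.le
    rw [div_mul_cancel₀ _ hδ.ne'] at this
    linarith [hfM y hy]

end StrictMax

section ExtremeCombination

variable {E : Type*} [AddCommGroup E] [Module ℝ E] {K : Set E} {f : E → ℝ} {x : E} {r : ℝ}

def extremeCombinationValues (K : Set E) (f : E → ℝ) (x : E) : Set ℝ :=
  {r : ℝ | ∃ (k : ℕ) (e : Fin k → E) (q : Fin k → ℝ),
    (∀ i, e i ∈ Set.extremePoints ℝ K) ∧ (∀ i, 0 ≤ q i) ∧ ∑ i, q i = 1 ∧
    ∑ i, q i • e i = x ∧ ∑ i, q i * f (e i) = r}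

lemma ConvexOn.le_of_mem_extremeCombinationValues (hf : ConvexOn ℝ K f)
    (hr : r ∈ extremeCombinationValues K f x) : f x ≤ r := by
  obtain ⟨k, e, q, he, hq0, hq1, rfl, rfl⟩ := hr
  simpa using hf.map_sum_le (fun i _ => hq0 i) hq1 fun i _ => extremePoints_subset (he i)

lemma le_affine_of_mem_extremeCombinationValues (c : ℝ) (L : E →ₗ[ℝ] ℝ)
    (hfL : ∀ e ∈ K.extremePoints ℝ, f e ≤ c + L e) (hr : r ∈ extremeCombinationValues K f x) :
    r ≤ c + L x := by
  obtain ⟨k, e, q, he, hq0, hq1, rfl, rfl⟩ := hr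
  calc ∑ i, q i * f (e i) ≤ ∑ i, q i * (c + L (e i)) :=
        Finset.sum_le_sum fun i _ => mul_le_mul_of_nonneg_left (hfL _ (he i)) (hq0 i)
    _ = c + L (∑ i, q i • e i) := by
        simp [mul_add, Finset.sum_add_distrib, ← Finset.sum_mul, hq1]

lemma sSup_extremeCombinationValues_le_add_mul_sub (ℓ : E →ₗ[ℝ] ℝ) {a C : ℝ} {x₀ : E}
    (hfC : ∀ e ∈ K.extremePoints ℝ, f e ≤ a + C * (ℓ x₀ - ℓ e))
    (hne : (extremeCombinationValues K f x).Nonempty) :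
    sSup (extremeCombinationValues K f x) ≤ a + C * (ℓ x₀ - ℓ x) := by
  refine csSup_le hne fun r hr => ?_
  have := le_affine_of_mem_extremeCombinationValues (a + C * ℓ x₀) (-(C • ℓ))
    (fun e he => by
      simp only [LinearMap.neg_apply, LinearMap.smul_apply, smul_eq_mul]
      linarith [hfC e he]) hr
  simp only [LinearMap.neg_apply, LinearMap.smul_apply, smul_eq_mul] at this
  linarith

lemma ConvexOn.le_sSup_extremeCombinationValues (hf : ConvexOn ℝ K f) {M : ℝ}
    (hfM : ∀ e ∈ K.extremePoints ℝ, f e ≤ M)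
    (hne : (extremeCombinationValues K f x).Nonempty) :
    f x ≤ sSup (extremeCombinationValues K f x) := by
  obtain ⟨r, hr⟩ := hne
  have hbdd : BddAbove (extremeCombinationValues K f x) :=
    ⟨M, fun _ hr' => by simpa using le_affine_of_mem_extremeCombinationValues M 0 (by simpa) hr'⟩
  exact (hf.le_of_mem_extremeCombinationValues hr).trans (le_csSup hbdd hr)

end ExtremeCombination

lemma extremeCombinationValues_nonempty {E : Type*} [NormedAddCommGroup E] [NormedSpace ℝ E]
    [FiniteDimensional ℝ E] {K : Set E} (f : E → ℝ) {x : E} (hK : IsCompact K)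
    (hKconv : Convex ℝ K) (hx : x ∈ K) : (extremeCombinationValues K f x).Nonempty := by
  obtain ⟨ι, _, q, e, hq0, hq1, he, hqe⟩ :=
    mem_convexHull_iff_exists_fintype.1 (hK.subset_convexHull_extremePoints hKconv hx)
  set σ := (Fintype.equivFin ι).symm
  exact ⟨_, Fintype.card ι, e ∘ σ, q ∘ σ, fun _ => he _, fun _ => hq0 _,
    by simpa [σ.sum_comp] using hq1, by simpa [σ.sum_comp (fun i => q i • e i)] using hqe, rfl⟩

lemma IsCompact.exists_sSup_extremeCombinationValues_le_of_strict_max {E : Type*}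
    [NormedAddCommGroup E] [NormedSpace ℝ E] [FiniteDimensional ℝ E] {K : Set E}
    (hK : IsCompact K) (hKconv : Convex ℝ K) {f : E → ℝ} (hf : ContinuousOn f K)
    (ℓ : StrongDual ℝ E) {x₀ : E} (hx₀ : x₀ ∈ K) (hlt : ∀ y ∈ K, y ≠ x₀ → ℓ y < ℓ x₀) {ε : ℝ}
    (hε : 0 < ε) :
    ∃ δ > 0, ∀ x ∈ K, ℓ x₀ - δ ≤ ℓ x → sSup (extremeCombinationValues K f x) ≤ f x₀ + ε := by
  obtain ⟨C, hC, hfC⟩ := hK.exists_le_add_mul_sub_of_strict_max hf ℓ.continuous.continuousOn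
    hx₀ hlt (half_pos hε)
  refine ⟨ε / 2 / C, by positivity, fun x hx hxℓ => ?_⟩
  have hsup := sSup_extremeCombinationValues_le_add_mul_sub (ℓ : E →ₗ[ℝ] ℝ)
    (fun e he => hfC e (extremePoints_subset he)) (extremeCombinationValues_nonempty f hK hKconv hx)
  have : C * (ℓ x₀ - ℓ x) ≤ ε / 2 := by
    rw [← le_div_iff₀' hC]
    linarith
  simp only [ContinuousLinearMap.coe_coe] at hsup
  linarith

theorem guessing_probability_continuous_at_unique_max_violation
    {E : Type*} [NormedAddCommGroup E] [NormedSpace ℝ E] [FiniteDimensional ℝ E]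
    (K : Set E) (hKc : IsCompact K) (hKconv : Convex ℝ K)
    (f : E → ℝ) (hf : ContinuousOn f K) (hfconv : ConvexOn ℝ K f)
    (G : E → ℝ)
    (hG : ∀ x : E, G x =
      sSup {r : ℝ | ∃ (k : ℕ) (e : Fin k → E) (q : Fin k → ℝ),
        (∀ i, e i ∈ Set.extremePoints ℝ K) ∧ (∀ i, 0 ≤ q i) ∧ ∑ i, q i = 1 ∧
        ∑ i, q i • e i = x ∧ ∑ i, q i * f (e i) = r})
    (ℓ : E →L[ℝ] ℝ) (xstar : E) (hxstar : xstar ∈ K)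
    (hmax : ∀ x ∈ K, ℓ x ≤ ℓ xstar)
    (hunique : ∀ x ∈ K, ℓ x = ℓ xstar → x = xstar) :
    G xstar = f xstar ∧
      ∀ ε > (0 : ℝ), ∃ δ > (0 : ℝ), ∀ x ∈ K, ℓ xstar - δ ≤ ℓ x →
        |G x - f xstar| ≤ ε := by
  change ∀ x, G x = sSup (extremeCombinationValues K f x) at hG
  have hlt : ∀ y ∈ K, y ≠ xstar → ℓ y < ℓ xstar := fun y hy hne =>
    (hmax y hy).lt_of_ne (mt (hunique y hy) hne)
  obtain ⟨M, hM⟩ := hKc.bddAbove_image hf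
  have hclose : ∀ ε > (0 : ℝ), ∃ δ > (0 : ℝ), ∀ x ∈ K, ℓ xstar - δ ≤ ℓ x →
      |G x - f xstar| ≤ ε := by
    intro ε hε
    obtain ⟨δ₁, hδ₁, hupper⟩ := hKc.exists_sSup_extremeCombinationValues_le_of_strict_max
      hKconv hf ℓ hxstar hlt hε
    obtain ⟨δ₂, hδ₂, hnear⟩ := hKc.exists_superlevel_subset_of_strict_max
      ℓ.continuous.continuousOn hlt (hf xstar hxstar (Ioi_mem_nhds (sub_lt_self _ hε)))
    refine ⟨min δ₁ δ₂, lt_min hδ₁ hδ₂, fun x hx hxℓ => abs_sub_le_iff.2 ⟨?_, ?_⟩⟩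
    · linarith [hG x ▸ hupper x hx (by linarith [min_le_left δ₁ δ₂])]
    · have hfx : f xstar - ε < f x := hnear x hx (by linarith [min_le_right δ₁ δ₂])
      have hfG : f x ≤ G x := hG x ▸ hfconv.le_sSup_extremeCombinationValues
        (fun e he => hM ⟨e, extremePoints_subset he, rfl⟩)
        (extremeCombinationValues_nonempty f hKc hKconv hx)
      linarith
  refine ⟨eq_of_forall_dist_le fun ε hε => ?_, hclose⟩
  obtain ⟨δ, hδ, h⟩ := hclose ε hε
  exact h xstar hxstar (by linarith)
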